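/- Let W = {x : r(x,G_x) < βn} and U = {x : r(x,G_x) ≥ αn} with β = α − Δ/n, and consider the probabilistic mechanism that selects x with probability 1 if x ∈ W, 0 if x ∈ U, and 1/2 otherwise. Its expected coincidence with I_α(G) is at least (|W| + |U|)/n ≥ β = α − Δ/n, for every graph G with maximal out-degree Δ ≤ αn. -/

import Mathlib

open Finset
open scoped Classical

/-- The in-edges of a node `x` in the edge set `E`. -/
def inEdges {V : Type*} [DecidableEq V] (E : Finset (V × V)) (x : V) : Finset (V × V) :=
  E.filter (fun e => e.2 = x)

/-- The out-edges of a node `x` in the edge set `E`. -/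
def outEdges {V : Type*} [DecidableEq V] (E : Finset (V × V)) (x : V) : Finset (V × V) :=
  E.filter (fun e => e.1 = x)

/-- The score of a node: the average of the weights of its in-edges, 0 if it has none. -/
noncomputable def score {V : Type*} [DecidableEq V] (E : Finset (V × V)) (w : V × V → ℝ)
    (x : V) : ℝ :=
  if inEdges E x = ∅ then 0 else (∑ e ∈ inEdges E x, w e) / (inEdges E x).card

/-- The ranking of a node: the number of nodes with strictly greater score. -/
noncomputable def rank {V : Type*} [Fintype V] [DecidableEq V] (E : Finset (V × V))
    (w : V × V → ℝ) (x : V) : ℕ :=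
  (Finset.univ.filter (fun y => score E w y > score E w x)).card

/-- The weight function obtained from `w` by setting all weights on out-edges of `x` to −1. -/
def negOut {V : Type*} [DecidableEq V] (w : V × V → ℝ) (x : V) : V × V → ℝ :=
  fun e => if e.1 = x then -1 else w e

/-!
Making the out-edges of `x` maximally negative leaves the score of `x` itself unchanged (there
are no loops), lowers no score (weights are at least `-1`), and changes only the scores of the at
most `Δ` out-neighbours of `x`. Hence `r(x,G_x) ≤ r(x,G) ≤ r(x,G_x) + Δ`, so `W ⊆ I_α(G)` and
`U` misses `I_α(G)`: the mechanism gains `1` on every node of `W ∪ U` and `0` on all others.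
Moreover `{x : r(x,G) < βn} ⊆ W`, and any set `{x : r(x,G) < c}` with `c ≤ n` has at least `c`
elements.
-/

section Score

variable {V : Type*} [DecidableEq V] (E : Finset (V × V))

lemma score_congr {w w' : V × V → ℝ} {y : V} (h : ∀ e ∈ inEdges E y, w' e = w e) :
    score E w' y = score E w y := by
  unfold score
  rw [Finset.sum_congr rfl h]

lemma score_mono {w w' : V × V → ℝ} {y : V} (h : ∀ e ∈ inEdges E y, w' e ≤ w e) :
    score E w' y ≤ score E w y := by
  unfold score
  split
  · exact le_rfl
  · exact div_le_div_of_nonneg_right (Finset.sum_le_sum h) (by positivity)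

lemma score_negOut_self (hloop : ∀ e ∈ E, e.1 ≠ e.2) (w : V × V → ℝ) (x : V) :
    score E (negOut w x) x = score E w x := by
  refine score_congr E fun e he => ?_
  rw [inEdges, mem_filter] at he
  have : e.1 ≠ x := he.2 ▸ hloop e he.1
  simp [negOut, this]

lemma score_negOut_of_notMem_image_snd {w : V × V → ℝ} {x y : V}
    (hy : y ∉ (outEdges E x).image Prod.snd) : score E (negOut w x) y = score E w y := by
  refine score_congr E fun e he => ?_
  rw [inEdges, mem_filter] at he
  have : e.1 ≠ x := fun hex =>
    hy (mem_image.2 ⟨e, by simp [outEdges, he.1, hex], he.2⟩)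
  simp [negOut, this]

lemma score_negOut_le {w : V × V → ℝ} (hw : ∀ e ∈ E, -1 ≤ w e) (x y : V) :
    score E (negOut w x) y ≤ score E w y := by
  refine score_mono E fun e he => ?_
  rw [inEdges, mem_filter] at he
  by_cases h : e.1 = x
  · simp [negOut, h, hw e he.1]
  · simp [negOut, h]

end Score

section Rank

variable {V : Type*} [Fintype V] [DecidableEq V] (E : Finset (V × V))

lemma rank_negOut_self_le (hloop : ∀ e ∈ E, e.1 ≠ e.2) {w : V × V → ℝ}
    (hw : ∀ e ∈ E, -1 ≤ w e) (x : V) : rank E (negOut w x) x ≤ rank E w x := by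
  refine card_le_card fun y hy => ?_
  simp only [mem_filter, mem_univ, true_and] at hy ⊢
  calc score E w x = score E (negOut w x) x := (score_negOut_self E hloop w x).symm
    _ < score E (negOut w x) y := hy
    _ ≤ score E w y := score_negOut_le E hw x y

lemma rank_le_rank_negOut_self_add (hloop : ∀ e ∈ E, e.1 ≠ e.2) (w : V × V → ℝ) (x : V) :
    rank E w x ≤ rank E (negOut w x) x + (outEdges E x).card := by
  have hsub : univ.filter (fun y => score E w y > score E w x) ⊆
      univ.filter (fun y => score E (negOut w x) y > score E (negOut w x) x) ∪
        (outEdges E x).image Prod.snd := by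
    intro y hy
    by_cases hT : y ∈ (outEdges E x).image Prod.snd
    · exact mem_union_right _ hT
    · refine mem_union_left _ ?_
      simp only [mem_filter, mem_univ, true_and] at hy ⊢
      rwa [score_negOut_of_notMem_image_snd E hT, score_negOut_self E hloop]
  calc rank E w x ≤ _ := card_le_card hsub
    _ ≤ rank E (negOut w x) x + ((outEdges E x).image Prod.snd).card := card_union_le _ _
    _ ≤ rank E (negOut w x) x + (outEdges E x).card := Nat.add_le_add_left card_image_le _

lemma le_card_filter_rank_lt (w : V × V → ℝ) {c : ℝ} (hc : c ≤ Fintype.card V) :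
    c ≤ (univ.filter (fun x => (rank E w x : ℝ) < c)).card := by
  rcases (univ.filter (fun x => c ≤ (rank E w x : ℝ))).eq_empty_or_nonempty with hhigh | hhigh
  · rw [filter_eq_empty_iff] at hhigh
    rwa [filter_true_of_mem fun x _ => lt_of_not_ge (hhigh (mem_univ x)), card_univ]
  -- every node scoring above the best-scoring high-rank node `m` has low rank
  obtain ⟨m, hm, hmax⟩ := exists_max_image _ (fun y => score E w y) hhigh
  rw [mem_filter] at hm
  have hsub : univ.filter (fun y => score E w y > score E w m) ⊆
      univ.filter (fun x => (rank E w x : ℝ) < c) := by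
    intro y hy
    simp only [mem_filter, mem_univ, true_and] at hy ⊢
    by_contra hy'
    exact (hmax y (mem_filter.2 ⟨mem_univ y, not_lt.1 hy'⟩)).not_gt hy
  calc c ≤ rank E w m := hm.2
    _ ≤ _ := by exact_mod_cast card_le_card hsub

lemma le_card_filter_rank_negOut_self_lt (hloop : ∀ e ∈ E, e.1 ≠ e.2) {w : V × V → ℝ}
    (hw : ∀ e ∈ E, -1 ≤ w e) {c : ℝ} (hc : c ≤ Fintype.card V) :
    c ≤ (univ.filter (fun x => (rank E (negOut w x) x : ℝ) < c)).card := by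
  have hsub : univ.filter (fun x => (rank E w x : ℝ) < c) ⊆
      univ.filter (fun x => (rank E (negOut w x) x : ℝ) < c) := by
    intro x hx
    simp only [mem_filter, mem_univ, true_and] at hx ⊢
    exact lt_of_le_of_lt (by exact_mod_cast rank_negOut_self_le E hloop hw x) hx
  exact (le_card_filter_rank_lt E w hc).trans (by exact_mod_cast card_le_card hsub)

end Rank

lemma sum_two_mul_sub_one_mul_sign {V : Type*} [Fintype V] [DecidableEq V] (P : V → Prop)
    [DecidablePred P] {W U : Finset V} (hW : ∀ x ∈ W, P x) (hU : ∀ x ∈ U, ¬ P x) (p : V → ℝ)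
    (hp : ∀ x, p x = if x ∈ W then 1 else if x ∈ U then 0 else 1 / 2) :
    ∑ x : V, (2 * p x - 1) * (if P x then (1 : ℝ) else -1) = W.card + U.card := by
  have hdisj : Disjoint W U := disjoint_left.2 fun x hxW hxU => hU x hxU (hW x hxW)
  have hterm : ∀ x, (2 * p x - 1) * (if P x then (1 : ℝ) else -1) =
      if x ∈ W ∪ U then 1 else 0 := by
    intro x
    rw [hp]
    by_cases hxW : x ∈ W
    · norm_num [hxW, hW x hxW]
    by_cases hxU : x ∈ U
    · norm_num [hxW, hxU, hU x hxU]
    · norm_num [hxW, hxU]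
  rw [sum_congr rfl fun x _ => hterm x, sum_boole, filter_mem_eq_inter, univ_inter,
    card_union_of_disjoint hdisj]
  push_cast
  rfl

theorem three_set_mechanism_quality_general {V : Type*} [Fintype V] [DecidableEq V]
    (E : Finset (V × V)) (w : V × V → ℝ) (n Δ : ℕ) (α : ℝ)
    (hn : Fintype.card V = n) (hn0 : 0 < n)
    (hα1 : α < 1)
    (hloop : ∀ e ∈ E, e.1 ≠ e.2)
    (hdeg : ∀ y : V, (outEdges E y).card ≤ Δ)
    (hw : ∀ e ∈ E, -1 ≤ w e ∧ w e ≤ 1)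
    (W U : Finset V)
    (hW : W = Finset.univ.filter (fun x => (rank E (negOut w x) x : ℝ) < (α - (Δ : ℝ) / n) * n))
    (hU : U = Finset.univ.filter (fun x => α * n ≤ (rank E (negOut w x) x : ℝ)))
    (p : V → ℝ)
    (hp : ∀ x, p x = if x ∈ W then 1 else if x ∈ U then 0 else 1 / 2) :
    ((W.card : ℝ) + U.card) / n ≤
        (1 / (n : ℝ)) * ∑ x : V, (2 * p x - 1) *
          (if (rank E w x : ℝ) < α * n then (1 : ℝ) else -1) ∧
      α - (Δ : ℝ) / n ≤ ((W.card : ℝ) + U.card) / n := by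
  have hnR : (0 : ℝ) < n := by exact_mod_cast hn0
  have hβ : (α - (Δ : ℝ) / n) * n = α * n - Δ := by field_simp
  have hw' : ∀ e ∈ E, -1 ≤ w e := fun e he => (hw e he).1
  have hWI : ∀ x ∈ W, (rank E w x : ℝ) < α * n := by
    intro x hx
    rw [hW, mem_filter, hβ] at hx
    have hshift : (rank E w x : ℝ) ≤ rank E (negOut w x) x + Δ := by
      exact_mod_cast (rank_le_rank_negOut_self_add E hloop w x).trans
        (Nat.add_le_add_left (hdeg x) _)
    linarith [hx.2]
  have hUI : ∀ x ∈ U, ¬ (rank E w x : ℝ) < α * n := by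
    intro x hx
    rw [hU, mem_filter] at hx
    exact not_lt.2 (hx.2.trans (by exact_mod_cast rank_negOut_self_le E hloop hw' x))
  have hWcard : (α - (Δ : ℝ) / n) * n ≤ W.card := by
    rw [hW]
    refine le_card_filter_rank_negOut_self_lt E hloop hw' ?_
    rw [hn, hβ]
    nlinarith [(Nat.cast_nonneg Δ : (0 : ℝ) ≤ Δ)]
  refine ⟨?_, ?_⟩
  · rw [sum_two_mul_sub_one_mul_sign _ hWI hUI p hp, one_div, inv_mul_eq_div]
  · rw [le_div_iff₀ hnR]
    linarith [(Nat.cast_nonneg U.card : (0 : ℝ) ≤ U.card)]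

/-- Let W = {x : r(x,G_x) < βn} and U = {x : r(x,G_x) ≥ αn}, β = α − Δ/n.
The IC probabilistic mechanism assigning probability 1 on W, 0 on U and 1/2 elsewhere has
expected coincidence with I_α(G) at least (|W|+|U|)/n ≥ β = α − Δ/n, for every graph with
maximal out-degree Δ ≤ αn. -/
theorem three_set_mechanism_quality {V : Type*} [Fintype V] [DecidableEq V]
    (E : Finset (V × V)) (w : V × V → ℝ) (n Δ : ℕ) (α : ℝ)
    (hn : Fintype.card V = n) (hn0 : 0 < n)
    (hα0 : 0 < α) (hα1 : α < 1) (hΔ : (Δ : ℝ) ≤ α * n)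
    (hloop : ∀ e ∈ E, e.1 ≠ e.2)
    (hdeg : ∀ y : V, (outEdges E y).card ≤ Δ)
    (hw : ∀ e ∈ E, -1 ≤ w e ∧ w e ≤ 1)
    (W U : Finset V)
    (hW : W = Finset.univ.filter (fun x => (rank E (negOut w x) x : ℝ) < (α - (Δ : ℝ) / n) * n))
    (hU : U = Finset.univ.filter (fun x => α * n ≤ (rank E (negOut w x) x : ℝ)))
    (p : V → ℝ)
    (hp : ∀ x, p x = if x ∈ W then 1 else if x ∈ U then 0 else 1 / 2) :
    ((W.card : ℝ) + U.card) / n ≤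
        (1 / (n : ℝ)) * ∑ x : V, (2 * p x - 1) *
          (if (rank E w x : ℝ) < α * n then (1 : ℝ) else -1) ∧
      α - (Δ : ℝ) / n ≤ ((W.card : ℝ) + U.card) / n :=
  three_set_mechanism_quality_general E w n Δ α hn hn0 hα1 hloop hdeg hw W U hW hU p hp
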